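/- Let H be a finite abelian group, n ≥ 2, and λ a type. If every non-zero-sum subset of (ℤ × H) \ {0} of type λ is sequenceable, then every non-zero-sum subset of (ℤ^n × H) \ {0} of type λ is sequenceable. -/

import Mathlib

/-! For a large enough `M`, the homomorphism `ψ(z) = ∑ z_i M^i : ℤ^n → ℤ` is injective on any
prescribed finite set, by uniqueness of base-`M` expansions with digits of absolute value `< M`.
Choosing that set to contain the first coordinates of `S`, of its sum and `0`, the map
`ψ × id : ℤ^n × H → ℤ × H` carries `S` to a non-zero-sum set of the same type avoiding `0`. A
sequencing of the image is linear since its sum is non-zero, and linear sequencings pull back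
along any homomorphism. -/

/-- An ordering (list) is a *linear sequencing* if its partial sums
`y_0 = 0, y_1, ..., y_k` are pairwise distinct. -/
def IsLinSeq {G : Type*} [AddCommGroup G] (l : List G) : Prop :=
  Function.Injective (fun i : Fin (l.length + 1) => (l.take i.val).sum)

/-- An ordering (list) is a *rotational sequencing* if its partial sums
`y_0 = 0, y_1, ..., y_k` are pairwise distinct except for `y_k = y_0 = 0`. -/
def IsRotSeq {G : Type*} [AddCommGroup G] (l : List G) : Prop :=
  l ≠ [] ∧ l.sum = 0 ∧
    Function.Injective (fun i : Fin l.length => (l.take i.val).sum)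

/-- A finite subset is *sequenceable* if some ordering of its elements is a
linear or a rotational sequencing. -/
def Sequenceable {G : Type*} [AddCommGroup G] (S : Finset G) : Prop :=
  ∃ l : List G, l.Nodup ∧ (∀ x, x ∈ l ↔ x ∈ S) ∧ (IsLinSeq l ∨ IsRotSeq l)

/-- A finite subset `S ⊆ G × H` has *type* `lam` if for each `h : H` exactly
`lam h` elements of `S` have second coordinate `h`. -/
def HasType {G H : Type*} (S : Finset (G × H)) (lam : H → ℕ) : Prop :=
  ∀ h : H, ({x ∈ (S : Set (G × H)) | x.2 = h}).ncard = lam h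

open Finset

section Sequencing

variable {G K : Type*} [AddCommGroup G] [AddCommGroup K]

theorem isLinSeq_iff {l : List G} :
    IsLinSeq l ↔ Set.InjOn (fun i => (l.take i).sum) (Set.Iic l.length) := by
  constructor
  · intro h i hi j hj hij
    exact congrArg Fin.val (@h ⟨i, Nat.lt_succ_of_le hi⟩ ⟨j, Nat.lt_succ_of_le hj⟩ hij)
  · intro h i j hij
    exact Fin.ext (h (Nat.le_of_lt_succ i.2) (Nat.le_of_lt_succ j.2) hij)

theorem IsLinSeq.of_map (φ : G →+ K) {l : List G} (h : IsLinSeq (l.map φ)) : IsLinSeq l := by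
  rw [isLinSeq_iff, List.length_map] at h
  rw [isLinSeq_iff]
  intro i hi j hj hij
  apply h hi hj
  simp only [← List.map_take, ← map_list_sum, hij]

theorem List.sum_eq_finset_sum {l : List G} {S : Finset G} (hl : l.Nodup)
    (hmem : ∀ x, x ∈ l ↔ x ∈ S) : l.sum = ∑ x ∈ S, x := by
  classical
  have hS : l.toFinset = S := Finset.ext fun x => by simpa using hmem x
  rw [← hS, List.sum_toFinset _ hl, List.map_id']

theorem Sequenceable.exists_isLinSeq {S : Finset G} (h : Sequenceable S)
    (hS : ∑ x ∈ S, x ≠ 0) : ∃ l : List G, l.Nodup ∧ (∀ x, x ∈ l ↔ x ∈ S) ∧ IsLinSeq l := by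
  obtain ⟨l, hl, hmem, hlin | hrot⟩ := h
  · exact ⟨l, hl, hmem, hlin⟩
  · exact absurd (List.sum_eq_finset_sum hl hmem ▸ hrot.2.1) hS

theorem Sequenceable.of_image [DecidableEq K] (φ : G →+ K) {S : Finset G}
    (hφ : Set.InjOn φ S) (hsum : φ (∑ x ∈ S, x) ≠ 0) (h : Sequenceable (S.image φ)) :
    Sequenceable S := by
  obtain ⟨l, hl, hmem, hlin⟩ := h.exists_isLinSeq (by rwa [sum_image hφ, ← map_sum])
  set g := Function.invFunOn φ S
  have hmap : (l.map g).map φ = l := by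
    rw [List.map_map]
    refine (List.map_congr_left fun y hy => ?_).trans (List.map_id l)
    exact Function.invFunOn_eq (by simpa using (hmem y).1 hy)
  refine ⟨l.map g, (hmap ▸ hl).of_map φ, fun x => ⟨?_, fun hx => ?_⟩,
    Or.inl ((hmap ▸ hlin).of_map φ)⟩
  · intro hx
    obtain ⟨y, hy, rfl⟩ := List.mem_map.1 hx
    exact Function.invFunOn_mem (by simpa using (hmem y).1 hy)
  · rw [← hφ.leftInvOn_invFunOn hx]
    exact List.mem_map_of_mem ((hmem _).2 (mem_image_of_mem φ hx))

end Sequencing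

theorem HasType.image {G G' H : Type*} [DecidableEq (G' × H)] {S : Finset (G × H)}
    {lam : H → ℕ} (f : G × H → G' × H) (hf : ∀ x, (f x).2 = x.2) (hinj : Set.InjOn f S)
    (h : HasType S lam) : HasType (S.image f) lam := by
  intro c
  have himage : {y ∈ ((S.image f : Finset _) : Set (G' × H)) | y.2 = c}
      = f '' {x ∈ (S : Set (G × H)) | x.2 = c} := by
    ext y
    simp only [coe_image, Set.mem_image, mem_coe]
    constructor
    · rintro ⟨⟨x, hx, rfl⟩, hc⟩
      exact ⟨x, ⟨hx, hf x ▸ hc⟩, rfl⟩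
    · rintro ⟨x, ⟨hx, hc⟩, rfl⟩
      exact ⟨⟨x, hx, rfl⟩, (hf x).trans hc⟩
  rw [himage, (hinj.mono (Set.sep_subset _ _)).ncard_image, h c]

theorem eq_zero_of_sum_mul_pow_eq_zero {m : ℕ} {M : ℤ} {d : Fin m → ℤ} (hd : ∀ i, |d i| < M)
    (h : ∑ i, d i * M ^ (i : ℕ) = 0) : d = 0 := by
  induction m with
  | zero => exact Subsingleton.elim _ _
  | succ k ih =>
    have hM : 0 < M := (abs_nonneg _).trans_lt (hd 0)
    set rest := ∑ i : Fin k, d i.succ * M ^ (i : ℕ)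
    have hsplit : d 0 + M * rest = 0 := by
      rw [Fin.sum_univ_succ] at h
      simpa [rest, pow_succ, Finset.mul_sum, mul_comm, mul_left_comm] using h
    have h0 : d 0 = 0 := Int.eq_zero_of_abs_lt_dvd ⟨-rest, by linarith⟩ (hd 0)
    have hrest : rest = 0 := by
      rw [h0, zero_add] at hsplit
      exact (mul_eq_zero.1 hsplit).resolve_left hM.ne'
    have htail := ih (fun i => hd i.succ) hrest
    ext i
    exact Fin.cases h0 (fun j => congrFun htail j) i

theorem exists_addMonoidHom_injOn {n : ℕ} (F : Finset (Fin n → ℤ)) :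
    ∃ ψ : (Fin n → ℤ) →+ ℤ, Set.InjOn ψ F := by
  obtain ⟨B, hB⟩ := Finset.exists_le ((F ×ˢ univ).image fun p : (Fin n → ℤ) × Fin n => |p.1 p.2|)
  have hbound : ∀ z ∈ F, ∀ i, |z i| ≤ B := fun z hz i =>
    hB _ (mem_image_of_mem _ (mem_product.2 ⟨hz, mem_univ i⟩ : (z, i) ∈ F ×ˢ univ))
  refine ⟨(Fintype.linearCombination ℤ fun i : Fin n => (2 * B + 1) ^ (i : ℕ)).toAddMonoidHom,
    fun z hz z' hz' hzz' => sub_eq_zero.1 <|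
      eq_zero_of_sum_mul_pow_eq_zero (M := 2 * B + 1) (fun i => ?_) ?_⟩
  · have := abs_sub (z i) (z' i)
    have := hbound z hz i
    have := hbound z' hz' i
    simp only [Pi.sub_apply]
    linarith
  · simpa [Fintype.linearCombination_apply, sub_mul, sum_sub_distrib, sub_eq_zero] using hzz'

theorem exists_addMonoidHom_prod_injOn {n : ℕ} {H : Type*} [AddCommGroup H]
    (F : Finset ((Fin n → ℤ) × H)) :
    ∃ φ : (Fin n → ℤ) × H →+ ℤ × H, (∀ x, (φ x).2 = x.2) ∧ Set.InjOn φ F := by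
  classical
  obtain ⟨ψ, hψ⟩ := exists_addMonoidHom_injOn (F.image Prod.fst)
  refine ⟨ψ.prodMap (AddMonoidHom.id H), fun _ => rfl, fun x hx y hy h => Prod.ext ?_ ?_⟩
  · exact hψ (mem_image_of_mem _ hx) (mem_image_of_mem _ hy) (congrArg Prod.fst h)
  · exact (congrArg Prod.snd h :)

theorem stmt_10_general (H : Type*) [AddCommGroup H] (lam : H → ℕ)
    (hyp : ∀ S : Finset (ℤ × H), (0 : ℤ × H) ∉ S → HasType S lam →
      (∑ x ∈ S, x) ≠ 0 → Sequenceable S)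
    (n : ℕ) :
    ∀ S : Finset ((Fin n → ℤ) × H), (0 : (Fin n → ℤ) × H) ∉ S →
      HasType S lam → (∑ x ∈ S, x) ≠ 0 → Sequenceable S := by
  intro S hS0 hStype hSsum
  classical
  obtain ⟨φ, hφ2, hφ⟩ := exists_addMonoidHom_prod_injOn (insert 0 (insert (∑ x ∈ S, x) S))
  have hφS : Set.InjOn φ S :=
    hφ.mono (coe_subset.2 ((subset_insert _ _).trans (subset_insert _ _)))
  have hφ0 : ∀ x ∈ insert (∑ x ∈ S, x) S, φ x = 0 → x = 0 := fun x hx h =>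
    hφ (mem_insert_of_mem hx) (mem_insert_self _ _) (h.trans (map_zero φ).symm)
  have hsum : φ (∑ x ∈ S, x) ≠ 0 := fun h => hSsum (hφ0 _ (mem_insert_self _ _) h)
  refine Sequenceable.of_image φ hφS hsum (hyp _ ?_ (hStype.image φ hφ2 hφS) ?_)
  · rw [mem_image]
    rintro ⟨x, hx, h⟩
    exact hS0 (hφ0 x (mem_insert_of_mem hx) h ▸ hx)
  · rwa [sum_image hφS, ← map_sum]

/-- If every non-zero-sum subset of (ℤ × H) minus {0} of type lam is
sequenceable then, for every n ≥ 2, so is every non-zero-sum subset of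
(ℤ^n × H) minus {0} of type lam. -/
theorem stmt_10 (H : Type*) [AddCommGroup H] [Fintype H] (lam : H → ℕ)
    (hyp : ∀ S : Finset (ℤ × H), (0 : ℤ × H) ∉ S → HasType S lam →
      (∑ x ∈ S, x) ≠ 0 → Sequenceable S)
    (n : ℕ) (hn : 2 ≤ n) :
    ∀ S : Finset ((Fin n → ℤ) × H), (0 : (Fin n → ℤ) × H) ∉ S →
      HasType S lam → (∑ x ∈ S, x) ≠ 0 → Sequenceable S :=
  stmt_10_general H lam hyp n
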